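/- Let (A,·,α) be a Hom-pre-Lie algebra, (V,β,ρ,μ) a representation of it with β bijective, and T: V → A a Hom-O-operator. Then (V,▷,◁,β) is a Hom-L-dendriform algebra, where u▷v = ρ(T(β^{-1}(u)))v and u◁v = −μ(T(β^{-1}(u)))v for u,v ∈ V. -/

import Mathlib

open TensorProduct LinearMap Module

section Defs

variable {K : Type*} [Field K]

section Basic
variable {A : Type*} [AddCommGroup A] [Module K A]
variable {B : Type*} [AddCommGroup B] [Module K B]
variable {V : Type*} [AddCommGroup V] [Module K V]

/-- A Hom-pre-Lie algebra structure. -/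
def IsHomPreLie (m : A →ₗ[K] A →ₗ[K] A) (α : A →ₗ[K] A) : Prop :=
  (∀ x y, α (m x y) = m (α x) (α y)) ∧
  ∀ x y z, m (m x y) (α z) - m (α x) (m y z) = m (m y x) (α z) - m (α y) (m x z)

/-- A Hom-Lie algebra structure. -/
def IsHomLie (br : A →ₗ[K] A →ₗ[K] A) (φ : A →ₗ[K] A) : Prop :=
  (∀ x y, br x y = - br y x) ∧
  (∀ x y, φ (br x y) = br (φ x) (φ y)) ∧
  ∀ x y z, br (φ x) (br y z) + br (φ y) (br z x) + br (φ z) (br x y) = 0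

/-- A representation of a Hom-Lie algebra on `V` with respect to `β`. -/
def IsHomLieRep (br : A →ₗ[K] A →ₗ[K] A) (φ : A →ₗ[K] A)
    (β : Module.End K V) (ρ : A →ₗ[K] Module.End K V) : Prop :=
  (∀ x, ρ (φ x) * β = β * ρ x) ∧
  ∀ x y, ρ (br x y) * β = ρ (φ x) * ρ y - ρ (φ y) * ρ x

/-- A representation of a Hom-pre-Lie algebra on `V` with respect to `β`. -/
def IsHomPreLieRep (m : A →ₗ[K] A →ₗ[K] A) (α : A →ₗ[K] A)
    (β : Module.End K V) (ρ μ : A →ₗ[K] Module.End K V) : Prop :=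
  IsHomLieRep (m - m.flip) α β ρ ∧
  (∀ x, β * μ x = μ (α x) * β) ∧
  ∀ x y, μ (α y) * μ x - μ (m x y) * β = μ (α y) * ρ x - ρ (α x) * μ y

/-- A 1-cocycle of a Hom-Lie algebra with respect to a representation. -/
def IsHomLieCocycle (br : A →ₗ[K] A →ₗ[K] A) (φ : A →ₗ[K] A)
    (ρ : A →ₗ[K] Module.End K V) (δ : A →ₗ[K] V) : Prop :=
  ∀ x y, δ (br x y) = ρ (φ x) (δ y) - ρ (φ y) (δ x)

/-- A matched pair of Hom-Lie algebras. -/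
def IsHomLieMatchedPair (brA : A →ₗ[K] A →ₗ[K] A) (φA : A →ₗ[K] A)
    (brB : B →ₗ[K] B →ₗ[K] B) (φB : B →ₗ[K] B)
    (ρ : A →ₗ[K] Module.End K B) (ρ' : B →ₗ[K] Module.End K A) : Prop :=
  IsHomLie brA φA ∧ IsHomLie brB φB ∧
  IsHomLieRep brA φA φB ρ ∧ IsHomLieRep brB φB φA ρ' ∧
  (∀ x y x', ρ' (φB x') (brA x y) =
    brA (ρ' x' x) (φA y) + brA (φA x) (ρ' x' y) + ρ' (ρ y x') (φA x) - ρ' (ρ x x') (φA y)) ∧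
  ∀ x x' y', ρ (φA x) (brB x' y') =
    brB (ρ x x') (φB y') + brB (φB x') (ρ x y') + ρ (ρ' y' x) (φB x') - ρ (ρ' x' x) (φB y')

/-- A matched pair of Hom-pre-Lie algebras. -/
def IsHomPreLieMatchedPair (mA : A →ₗ[K] A →ₗ[K] A) (αA : A →ₗ[K] A)
    (mB : B →ₗ[K] B →ₗ[K] B) (αB : B →ₗ[K] B)
    (lA rA : A →ₗ[K] Module.End K B) (lB rB : B →ₗ[K] Module.End K A) : Prop :=
  IsHomPreLie mA αA ∧ IsHomPreLie mB αB ∧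
  IsHomPreLieRep mA αA αB lA rA ∧ IsHomPreLieRep mB αB αA lB rB ∧
  (∀ (x : A) (a b : B), rA (αA x) (mB a b - mB b a) =
    rA (lB b x) (αB a) - rA (lB a x) (αB b) + mB (αB a) (rA x b) - mB (αB b) (rA x a)) ∧
  (∀ (x : A) (a b : B), lA (αA x) (mB a b) =
    -(lA (lB a x - rB a x) (αB b)) + mB (lA x a - rA x a) (αB b)
      + rA (rB b x) (αB a) + mB (αB a) (lA x b)) ∧
  (∀ (a : B) (x y : A), rB (αB a) (mA x y - mA y x) =
    rB (lA y a) (αA x) - rB (lA x a) (αA y) + mA (αA x) (rB a y) - mA (αA y) (rB a x)) ∧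
  ∀ (a : B) (x y : A), lB (αB a) (mA x y) =
    -(lB (lA x a - rA x a) (αA y)) + mA (lB a x - rB a x) (αA y)
      + rB (rA y a) (αA x) + mA (αA x) (lB a y)

/-- A Hom-L-dendriform algebra structure. -/
def IsHomLDendriform (tr tl : A →ₗ[K] A →ₗ[K] A) (α : A →ₗ[K] A) : Prop :=
  (∀ x y, α (tr x y) = tr (α x) (α y)) ∧
  (∀ x y, α (tl x y) = tl (α x) (α y)) ∧
  (∀ x y z, tr (tr x y) (α z) + tr (tl x y) (α z) + tr (α y) (tr x z)
      - tr (tl y x) (α z) - tr (tr y x) (α z) - tr (α x) (tr y z) = 0) ∧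
  ∀ x y z, tl (tr x y) (α z) + tl (α y) (tr x z) + tl (α y) (tl x z)
      - tl (tl y x) (α z) - tr (α x) (tl y z) = 0

/-- A Hom-O-operator on a Hom-pre-Lie algebra with respect to a representation. -/
def IsHomOOperator (m : A →ₗ[K] A →ₗ[K] A) (α : A →ₗ[K] A)
    (β : V ≃ₗ[K] V) (ρ μ : A →ₗ[K] Module.End K V) (T : V →ₗ[K] A) : Prop :=
  (∀ v, T (β v) = α (T v)) ∧
  ∀ u v, m (T u) (T v) = T (ρ (T (β.symm u)) v + μ (T (β.symm v)) u)

/-- A quadratic Hom-pre-Lie algebra. -/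
def IsQuadraticHomPreLie (m : A →ₗ[K] A →ₗ[K] A) (α : A →ₗ[K] A)
    (ω : A →ₗ[K] A →ₗ[K] K) : Prop :=
  IsHomPreLie m α ∧
  (∀ x y, ω x y = - ω y x) ∧
  (∀ x, (∀ y, ω x y = 0) → x = 0) ∧
  (∀ x y, ω (α x) (α y) = ω x y) ∧
  ∀ x y z, ω (m x y) (α z) = - ω (α y) (m x z - m z x)

/-- A Manin triple for Hom-pre-Lie algebras. -/
def IsManinTriple (m : A →ₗ[K] A →ₗ[K] A) (α : A →ₗ[K] A)
    (ω : A →ₗ[K] A →ₗ[K] K) (A1 A2 : Submodule K A) : Prop :=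
  IsQuadraticHomPreLie m α ω ∧
  (∀ x ∈ A1, ∀ y ∈ A1, m x y ∈ A1) ∧ (∀ x ∈ A1, α x ∈ A1) ∧
  (∀ x ∈ A2, ∀ y ∈ A2, m x y ∈ A2) ∧ (∀ x ∈ A2, α x ∈ A2) ∧
  (∀ x ∈ A1, ∀ y ∈ A1, ω x y = 0) ∧ (∀ x ∈ A2, ∀ y ∈ A2, ω x y = 0) ∧
  IsCompl A1 A2

/-- A Hessian structure on a Hom-pre-Lie algebra. -/
def IsHessian (m : A →ₗ[K] A →ₗ[K] A) (α : A →ₗ[K] A) (Bf : A →ₗ[K] A →ₗ[K] K) : Prop :=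
  (∀ x y, Bf x y = Bf y x) ∧ (∀ x, (∀ y, Bf x y = 0) → x = 0) ∧
  (∀ x y, Bf (α x) (α y) = Bf x y) ∧
  ∀ x y z, Bf (m x y) (α z) - Bf (α x) (m y z) = Bf (m y x) (α z) - Bf (α y) (m x z)

end Basic

section Transpose
variable {X Y : Type*} [AddCommGroup X] [Module K X] [AddCommGroup Y] [Module K Y]

/-- The transpose of linear maps, as a bundled linear map. -/
noncomputable def transposeH : (X →ₗ[K] Y) →ₗ[K] (Y →ₗ[K] K) →ₗ[K] (X →ₗ[K] K) :=
  (LinearMap.llcomp K X Y K).flip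

@[simp] theorem transposeH_apply (f : X →ₗ[K] Y) (ξ : Y →ₗ[K] K) (x : X) :
    transposeH f ξ x = ξ (f x) := rfl

end Transpose

section StarOps
variable {A : Type*} [AddCommGroup A] [Module K A]

/-- The evaluation map into the double dual. -/
noncomputable def evalH : A →ₗ[K] ((A →ₗ[K] K) →ₗ[K] K) :=
  (LinearMap.id : (A →ₗ[K] K) →ₗ[K] (A →ₗ[K] K)).flip

/-- The operator `L^⋆` : `⟨L^⋆_x ξ, y⟩ = -⟨ξ, α⁻¹(x) · α⁻²(y)⟩`. -/
noncomputable def Lstar (m : A →ₗ[K] A →ₗ[K] A) (α : A ≃ₗ[K] A) :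
    A →ₗ[K] (A →ₗ[K] K) →ₗ[K] (A →ₗ[K] K) :=
  @Neg.neg _ (LinearMap.instNeg (R₁ := K) (R₂ := K) (M := A) (N₂ := (A →ₗ[K] K) →ₗ[K] (A →ₗ[K] K)) (σ₁₂ := RingHom.id K)) (transposeH ∘ₗ
      (LinearMap.lcomp K A ((α ^ (-2 : ℤ) : A ≃ₗ[K] A) : A →ₗ[K] A)) ∘ₗ m ∘ₗ
      ((α⁻¹ : A ≃ₗ[K] A) : A →ₗ[K] A))

/-- The operator `R^⋆` : `⟨R^⋆_x ξ, y⟩ = -⟨ξ, α⁻²(y) · α⁻¹(x)⟩`. -/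
noncomputable def Rstar (m : A →ₗ[K] A →ₗ[K] A) (α : A ≃ₗ[K] A) :
    A →ₗ[K] (A →ₗ[K] K) →ₗ[K] (A →ₗ[K] K) :=
  @Neg.neg _ (LinearMap.instNeg (R₁ := K) (R₂ := K) (M := A) (N₂ := (A →ₗ[K] K) →ₗ[K] (A →ₗ[K] K)) (σ₁₂ := RingHom.id K)) (transposeH ∘ₗ
      (LinearMap.lcomp K A ((α ^ (-2 : ℤ) : A ≃ₗ[K] A) : A →ₗ[K] A)) ∘ₗ m.flip ∘ₗ
      ((α⁻¹ : A ≃ₗ[K] A) : A →ₗ[K] A))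

/-- The operator `ad^⋆ = L^⋆ - R^⋆`. -/
noncomputable def adStar (m : A →ₗ[K] A →ₗ[K] A) (α : A ≃ₗ[K] A) :
    A →ₗ[K] (A →ₗ[K] K) →ₗ[K] (A →ₗ[K] K) :=
  @HSub.hSub _ _ _ (@instHSub _ (LinearMap.instSub (R₁ := K) (R₂ := K) (M := A) (N₂ := (A →ₗ[K] K) →ₗ[K] (A →ₗ[K] K)) (σ₁₂ := RingHom.id K))) (Lstar m α) (Rstar m α)

variable [FiniteDimensional K A]

/-- The inverse of the double-dual evaluation isomorphism. -/
noncomputable def evalInvH : ((A →ₗ[K] K) →ₗ[K] K) →ₗ[K] A :=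
  (Module.evalEquiv K A).symm.toLinearMap

/-- The operator `ℒ^⋆` : `⟨η, ℒ^⋆_ξ x⟩ = -⟨(α⁻¹)*(ξ) ∘ η, α²(x)⟩`. -/
noncomputable def Lcurly
    (mc : (A →ₗ[K] K) →ₗ[K] (A →ₗ[K] K) →ₗ[K] (A →ₗ[K] K))
    (α : A ≃ₗ[K] A) : (A →ₗ[K] K) →ₗ[K] A →ₗ[K] A :=
  -((LinearMap.llcomp K A ((A →ₗ[K] K) →ₗ[K] K) A evalInvH) ∘ₗ
      (LinearMap.lcomp K ((A →ₗ[K] K) →ₗ[K] K)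
        (evalH ∘ₗ ((α ^ (2 : ℤ) : A ≃ₗ[K] A) : A →ₗ[K] A))) ∘ₗ
      transposeH ∘ₗ mc ∘ₗ
      (transposeH ((α⁻¹ : A ≃ₗ[K] A) : A →ₗ[K] A)))

/-- The operator `ℛ^⋆` : `⟨η, ℛ^⋆_ξ x⟩ = -⟨η ∘ (α⁻¹)*(ξ), α²(x)⟩`. -/
noncomputable def Rcurly
    (mc : (A →ₗ[K] K) →ₗ[K] (A →ₗ[K] K) →ₗ[K] (A →ₗ[K] K))
    (α : A ≃ₗ[K] A) : (A →ₗ[K] K) →ₗ[K] A →ₗ[K] A :=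
  -((LinearMap.llcomp K A ((A →ₗ[K] K) →ₗ[K] K) A evalInvH) ∘ₗ
      (LinearMap.lcomp K ((A →ₗ[K] K) →ₗ[K] K)
        (evalH ∘ₗ ((α ^ (2 : ℤ) : A ≃ₗ[K] A) : A →ₗ[K] A))) ∘ₗ
      transposeH ∘ₗ mc.flip ∘ₗ
      (transposeH ((α⁻¹ : A ≃ₗ[K] A) : A →ₗ[K] A)))

/-- The operator `𝔞𝔡^⋆ = ℒ^⋆ - ℛ^⋆`. -/
noncomputable def adCurly
    (mc : (A →ₗ[K] K) →ₗ[K] (A →ₗ[K] K) →ₗ[K] (A →ₗ[K] K))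
    (α : A ≃ₗ[K] A) : (A →ₗ[K] K) →ₗ[K] A →ₗ[K] A :=
  Lcurly mc α - Rcurly mc α

end StarOps

section Tensor
variable {A : Type*} [AddCommGroup A] [Module K A]

/-- The pairing of `ξ ⊗ η` with elements of `A ⊗ A`. -/
noncomputable def tpair (ξ η : A →ₗ[K] K) : (A ⊗[K] A) →ₗ[K] K :=
  (TensorProduct.lid K K).toLinearMap ∘ₗ TensorProduct.map ξ η

/-- The pairing of `x ⊗ y` with elements of `A* ⊗ A*`. -/
noncomputable def dpair (x y : A) : ((A →ₗ[K] K) ⊗[K] (A →ₗ[K] K)) →ₗ[K] K :=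
  (TensorProduct.lid K K).toLinearMap ∘ₗ TensorProduct.map (evalH x) (evalH y)

/-- Pairing the first two tensor components of `A ⊗ A ⊗ A` with `ξ` and `η`. -/
noncomputable def pair12 (ξ η : A →ₗ[K] K) : (A ⊗[K] (A ⊗[K] A)) →ₗ[K] A :=
  (TensorProduct.lid K A).toLinearMap ∘ₗ
    TensorProduct.map ξ ((TensorProduct.lid K A).toLinearMap ∘ₗ
      TensorProduct.map η LinearMap.id)

/-- The map `r^♯ : A* → A` associated to `r ∈ A ⊗ A`, `⟨r^♯(ξ), η⟩ = ⟨r, ξ ⊗ η⟩`. -/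
noncomputable def rSharpL (r : A ⊗[K] A) : (A →ₗ[K] K) →ₗ[K] A :=
  ((LinearMap.llcomp K (A ⊗[K] A) (K ⊗[K] A) A (TensorProduct.lid K A).toLinearMap) ∘ₗ
    (LinearMap.rTensorHom A)).flip r

/-- The bilinear operation producing `[[r,r]]` out of `r ⊗ r`. -/
noncomputable def homPreLieBB (m : A →ₗ[K] A →ₗ[K] A) (α : A →ₗ[K] A) :
    ((A ⊗[K] A) ⊗[K] (A ⊗[K] A)) →ₗ[K] (A ⊗[K] (A ⊗[K] A)) :=
  (TensorProduct.assoc K A A A).toLinearMap ∘ₗ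
      (TensorProduct.map (TensorProduct.map α α) (TensorProduct.lift m)) ∘ₗ
      (TensorProduct.tensorTensorTensorComm K A A A A).toLinearMap
    - (TensorProduct.map α (TensorProduct.map (TensorProduct.lift (m.flip - m)) α)) ∘ₗ
      (LinearMap.lTensor A ((TensorProduct.assoc K A A A).symm.toLinearMap)) ∘ₗ
      (TensorProduct.assoc K A A (A ⊗[K] A)).toLinearMap
    - (TensorProduct.map (TensorProduct.lift m)
        ((TensorProduct.map α α) ∘ₗ (TensorProduct.comm K A A).toLinearMap)) ∘ₗ
      (TensorProduct.tensorTensorTensorComm K A A A A).toLinearMap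

/-- The element `[[r,r]] ∈ A ⊗ A ⊗ A`. -/
noncomputable def bracket2 (m : A →ₗ[K] A →ₗ[K] A) (α : A →ₗ[K] A) (r : A ⊗[K] A) :
    A ⊗[K] (A ⊗[K] A) :=
  homPreLieBB m α (r ⊗ₜ[K] r)

/-- A Hom-s-matrix in a Hom-pre-Lie algebra. -/
def IsHomSMatrix {B : Type*} [AddCommGroup B] [Module K B]
    (mB : B →ₗ[K] B →ₗ[K] B) (γ : B ≃ₗ[K] B) (r : B ⊗[K] B) : Prop :=
  (TensorProduct.comm K B B) r = r ∧
  (∀ ξ, rSharpL r (ξ ∘ₗ ((γ⁻¹ : B ≃ₗ[K] B) : B →ₗ[K] B)) = γ (rSharpL r ξ)) ∧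
  bracket2 mB (γ : B →ₗ[K] B) r = 0

/-- The representation `x ↦ F(x) ⊗ c + c ⊗ G(x)` on `Y ⊗ Y`. -/
noncomputable def tensorRep {Y : Type*} [AddCommGroup Y] [Module K Y]
    (F G : A →ₗ[K] Y →ₗ[K] Y) (c : Y →ₗ[K] Y) :
    A →ₗ[K] Module.End K (Y ⊗[K] Y) :=
  (LinearMap.mulRight K (LinearMap.lTensor Y c)) ∘ₗ (LinearMap.rTensorHom Y) ∘ₗ F
    + (LinearMap.mulLeft K (LinearMap.rTensor Y c)) ∘ₗ (LinearMap.lTensorHom Y) ∘ₗ G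

/-- The dual map `ρ^⋆` : `⟨ρ^⋆(x)ξ, u⟩ = -⟨(β⁻²)*(ξ), ρ(α(x))u⟩`. -/
noncomputable def rhoStar {V : Type*} [AddCommGroup V] [Module K V]
    (α : A →ₗ[K] A) (β : V ≃ₗ[K] V) (ρ : A →ₗ[K] Module.End K V) :
    A →ₗ[K] (V →ₗ[K] K) →ₗ[K] (V →ₗ[K] K) :=
  @Neg.neg _ (LinearMap.instNeg (R₁ := K) (R₂ := K) (M := A) (N₂ := (V →ₗ[K] K) →ₗ[K] (V →ₗ[K] K)) (σ₁₂ := RingHom.id K)) (transposeH ∘ₗ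
      (LinearMap.mulLeft K (((β ^ (-2 : ℤ) : V ≃ₗ[K] V) : V →ₗ[K] V) : Module.End K V)) ∘ₗ
      ρ ∘ₗ α)

/-- The semidirect product Hom-pre-Lie product on `A × W`. -/
noncomputable def sdProduct {W : Type*} [AddCommGroup W] [Module K W]
    (m : A →ₗ[K] A →ₗ[K] A) (l r : A →ₗ[K] W →ₗ[K] W) :
    (A × W) →ₗ[K] (A × W) →ₗ[K] (A × W) :=
  (m.compl₁₂ (LinearMap.fst K A W) (LinearMap.fst K A W)).compr₂ (LinearMap.inl K A W)
    + ((l.compl₁₂ (LinearMap.fst K A W) (LinearMap.snd K A W))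
        + (r.compl₁₂ (LinearMap.fst K A W) (LinearMap.snd K A W)).flip).compr₂
      (LinearMap.inr K A W)

end Tensor

section Std
variable (K)
variable (A : Type*) [AddCommGroup A] [Module K A]

/-- The standard bilinear form `ω̄(x+ξ, y+η) = ⟨ξ,y⟩ - ⟨η,x⟩` on `A × A*`. -/
noncomputable def stdOmega :
    (A × (A →ₗ[K] K)) →ₗ[K] (A × (A →ₗ[K] K)) →ₗ[K] K :=
  (LinearMap.id : (A →ₗ[K] K) →ₗ[K] (A →ₗ[K] K)).compl₁₂
      (LinearMap.snd K A (A →ₗ[K] K)) (LinearMap.fst K A (A →ₗ[K] K))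
    - ((LinearMap.id : (A →ₗ[K] K) →ₗ[K] (A →ₗ[K] K)).compl₁₂
      (LinearMap.snd K A (A →ₗ[K] K)) (LinearMap.fst K A (A →ₗ[K] K))).flip

variable {K A}

/-- The standard product `⋄` on `A × A*`:
`(x+ξ) ⋄ (y+η) = x·y + 𝔞𝔡^⋆_ξ y - ℛ^⋆_η x + ξ∘η + ad^⋆_x η - R^⋆_y ξ`. -/
noncomputable def stdDiamond [FiniteDimensional K A]
    (m : A →ₗ[K] A →ₗ[K] A) (α : A ≃ₗ[K] A)
    (mc : (A →ₗ[K] K) →ₗ[K] (A →ₗ[K] K) →ₗ[K] (A →ₗ[K] K)) :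
    (A × (A →ₗ[K] K)) →ₗ[K] (A × (A →ₗ[K] K)) →ₗ[K] (A × (A →ₗ[K] K)) :=
  (m.compl₁₂ (LinearMap.fst K A (A →ₗ[K] K)) (LinearMap.fst K A (A →ₗ[K] K))
      + (adCurly mc α).compl₁₂ (LinearMap.snd K A (A →ₗ[K] K)) (LinearMap.fst K A (A →ₗ[K] K))
      - ((Rcurly mc α).compl₁₂ (LinearMap.snd K A (A →ₗ[K] K))
          (LinearMap.fst K A (A →ₗ[K] K))).flip).compr₂
      (LinearMap.inl K A (A →ₗ[K] K))
    + (@HSub.hSub _ _ _ (@instHSub _ (LinearMap.instSub (R₁ := K) (R₂ := K) (M := (A × (A →ₗ[K] K))) (N₂ := (A × (A →ₗ[K] K)) →ₗ[K] (A →ₗ[K] K)) (σ₁₂ := RingHom.id K))) (mc.compl₁₂ (LinearMap.snd K A (A →ₗ[K] K)) (LinearMap.snd K A (A →ₗ[K] K))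
      + (adStar m α).compl₁₂ (LinearMap.fst K A (A →ₗ[K] K)) (LinearMap.snd K A (A →ₗ[K] K)))
      (((Rstar m α).compl₁₂ (LinearMap.fst K A (A →ₗ[K] K))
          (LinearMap.snd K A (A →ₗ[K] K))).flip)).compr₂
      (LinearMap.inr K A (A →ₗ[K] K))

end Std

section Bialg
variable {A : Type*} [AddCommGroup A] [Module K A]

/-- A Hom-pre-Lie bialgebra: the two 1-cocycle conditions on the
comultiplications `φ*` and `ψ*`. -/
def IsHomPreLieBialgebra (m : A →ₗ[K] A →ₗ[K] A) (α : A ≃ₗ[K] A)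
    (mc : (A →ₗ[K] K) →ₗ[K] (A →ₗ[K] K) →ₗ[K] (A →ₗ[K] K))
    (φs : A →ₗ[K] A ⊗[K] A)
    (ψs : (A →ₗ[K] K) →ₗ[K] (A →ₗ[K] K) ⊗[K] (A →ₗ[K] K)) : Prop :=
  IsHomLieCocycle (m - m.flip) (α : A →ₗ[K] A)
    (tensorRep (m ∘ₗ ((α ^ (-2 : ℤ) : A ≃ₗ[K] A) : A →ₗ[K] A))
      ((m - m.flip) ∘ₗ ((α ^ (-2 : ℤ) : A ≃ₗ[K] A) : A →ₗ[K] A))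
      (α : A →ₗ[K] A)) φs ∧
  IsHomLieCocycle (@HSub.hSub _ _ _ (@instHSub _ (LinearMap.instSub (R₁ := K) (R₂ := K) (M := (A →ₗ[K] K)) (N₂ := (A →ₗ[K] K) →ₗ[K] (A →ₗ[K] K)) (σ₁₂ := RingHom.id K))) mc mc.flip) (transposeH ((α⁻¹ : A ≃ₗ[K] A) : A →ₗ[K] A))
    (tensorRep (mc ∘ₗ transposeH ((α ^ (2 : ℤ) : A ≃ₗ[K] A) : A →ₗ[K] A))
      ((@HSub.hSub _ _ _ (@instHSub _ (LinearMap.instSub (R₁ := K) (R₂ := K) (M := (A →ₗ[K] K)) (N₂ := (A →ₗ[K] K) →ₗ[K] (A →ₗ[K] K)) (σ₁₂ := RingHom.id K))) mc mc.flip) ∘ₗ transposeH ((α ^ (2 : ℤ) : A ≃ₗ[K] A) : A →ₗ[K] A))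
      (transposeH ((α⁻¹ : A ≃ₗ[K] A) : A →ₗ[K] A))) ψs

end Bialg

end Defs

universe u v

/-! Writing `S = T ∘ β⁻¹`, the Hom-O-operator identity says `S u · S v = S (u ▷ v - v ◁ u)` and
`S ∘ β = α ∘ S`. The two Hom-L-dendriform identities are then exactly the two representation
identities `ρ([x, y]) ∘ β = ρ(α x) ∘ ρ(y) - ρ(α y) ∘ ρ(x)` and
`μ(α y) ∘ μ(x) - μ(x · y) ∘ β = μ(α y) ∘ ρ(x) - ρ(α x) ∘ μ(y)` evaluated at `x = S u`, `y = S v`. -/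

namespace IsHomPreLieRep

variable {K : Type*} [Field K] {A V : Type*} [AddCommGroup A] [Module K A]
  [AddCommGroup V] [Module K V] {m : A →ₗ[K] A →ₗ[K] A} {α : A →ₗ[K] A}
  {β : Module.End K V} {ρ μ : A →ₗ[K] Module.End K V}

theorem rho_map_apply_map (hrep : IsHomPreLieRep m α β ρ μ) (x : A) (v : V) :
    ρ (α x) (β v) = β (ρ x v) :=
  LinearMap.congr_fun (hrep.1.1 x) v

theorem mu_map_apply_map (hrep : IsHomPreLieRep m α β ρ μ) (x : A) (v : V) :
    μ (α x) (β v) = β (μ x v) :=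
  (LinearMap.congr_fun (hrep.2.1 x) v).symm

theorem rho_commutator_apply (hrep : IsHomPreLieRep m α β ρ μ) (x y : A) (w : V) :
    ρ (m x y - m y x) (β w) = ρ (α x) (ρ y w) - ρ (α y) (ρ x w) :=
  LinearMap.congr_fun (hrep.1.2 x y) w

theorem mu_mu_sub_mu_mul_apply (hrep : IsHomPreLieRep m α β ρ μ) (x y : A) (w : V) :
    μ (α y) (μ x w) - μ (m x y) (β w) = μ (α y) (ρ x w) - ρ (α x) (μ y w) :=
  LinearMap.congr_fun (hrep.2.2 x y) w

theorem isHomLDendriform_of_map_mul (hrep : IsHomPreLieRep m α β ρ μ) (S : V →ₗ[K] A)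
    (hSβ : ∀ v, S (β v) = α (S v))
    (hSm : ∀ u v, m (S u) (S v) = S (ρ (S u) v + μ (S v) u)) :
    IsHomLDendriform (ρ ∘ₗ S) (-(μ ∘ₗ S)) β := by
  refine ⟨fun u v => ?_, fun u v => ?_, fun u v w => ?_, fun u v w => ?_⟩
  · simp only [LinearMap.comp_apply, hSβ, hrep.rho_map_apply_map]
  · simp only [LinearMap.neg_apply, LinearMap.comp_apply, map_neg, hSβ, hrep.mu_map_apply_map]
  · have key := hrep.rho_commutator_apply (S u) (S v) w
    rw [hSm, hSm] at key
    simp only [LinearMap.neg_apply, LinearMap.comp_apply, map_neg, hSβ, map_add,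
      map_sub, LinearMap.add_apply, LinearMap.sub_apply] at key ⊢
    rw [← sub_eq_zero.2 key]
    abel
  · have key := hrep.mu_mu_sub_mu_mul_apply (S u) (S v) w
    rw [hSm] at key
    simp only [LinearMap.neg_apply, LinearMap.comp_apply, map_neg, hSβ, map_add,
      LinearMap.add_apply] at key ⊢
    rw [← sub_eq_zero.2 key]
    abel

end IsHomPreLieRep

namespace IsHomOOperator

variable {K : Type*} [Field K] {A V : Type*} [AddCommGroup A] [Module K A]
  [AddCommGroup V] [Module K V] {m : A →ₗ[K] A →ₗ[K] A} {α : A →ₗ[K] A}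
  {β : V ≃ₗ[K] V} {ρ μ : A →ₗ[K] Module.End K V} {T : V →ₗ[K] A}

theorem comp_symm_apply_map (hT : IsHomOOperator m α β ρ μ T) (v : V) :
    T (β.symm (β v)) = α (T (β.symm v)) := by
  rw [← hT.1, β.apply_symm_apply, β.symm_apply_apply]

theorem mul_comp_symm_apply (hT : IsHomOOperator m α β ρ μ T)
    (hrep : IsHomPreLieRep m α (β : Module.End K V) ρ μ) (u v : V) :
    m (T (β.symm u)) (T (β.symm v)) =
      T (β.symm (ρ (T (β.symm u)) v + μ (T (β.symm v)) u)) := by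
  have hT_symm : ∀ w, T (β.symm w) = α (T (β.symm (β.symm w))) := fun w => by
    rw [← hT.comp_symm_apply_map, β.apply_symm_apply]
  have hβ_symm : ∀ x w, β.symm (ρ (α x) w) = ρ x (β.symm w) := fun x w => by
    rw [β.symm_apply_eq]
    simpa using hrep.rho_map_apply_map x (β.symm w)
  have hβ_symm' : ∀ x w, β.symm (μ (α x) w) = μ x (β.symm w) := fun x w => by
    rw [β.symm_apply_eq]
    simpa using hrep.mu_map_apply_map x (β.symm w)
  rw [hT.2, hT_symm u, hT_symm v, map_add β.symm, hβ_symm, hβ_symm']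

end IsHomOOperator

theorem stmt_14_general {K : Type*} [Field K] {A : Type*} [AddCommGroup A] [Module K A]
    {V : Type*} [AddCommGroup V] [Module K V]
    (m : A →ₗ[K] A →ₗ[K] A) (α : A →ₗ[K] A)
    (β : V ≃ₗ[K] V) (ρ μ : A →ₗ[K] Module.End K V)
    (hrep : IsHomPreLieRep m α ((β : V →ₗ[K] V) : Module.End K V) ρ μ)
    (T : V →ₗ[K] A)
    (hT : IsHomOOperator m α β ρ μ T) :
    IsHomLDendriform (ρ ∘ₗ T ∘ₗ (β.symm : V →ₗ[K] V))
      (-(μ ∘ₗ T ∘ₗ (β.symm : V →ₗ[K] V))) (β : V →ₗ[K] V) :=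
  hrep.isHomLDendriform_of_map_mul (T ∘ₗ (β.symm : V →ₗ[K] V)) hT.comp_symm_apply_map
    (hT.mul_comp_symm_apply hrep)

theorem stmt_14 {K : Type*} [Field K] {A : Type*} [AddCommGroup A] [Module K A]
    {V : Type*} [AddCommGroup V] [Module K V]
    (m : A →ₗ[K] A →ₗ[K] A) (α : A →ₗ[K] A)
    (h : IsHomPreLie m α)
    (β : V ≃ₗ[K] V) (ρ μ : A →ₗ[K] Module.End K V)
    (hrep : IsHomPreLieRep m α ((β : V →ₗ[K] V) : Module.End K V) ρ μ)
    (T : V →ₗ[K] A)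
    (hT : IsHomOOperator m α β ρ μ T) :
    IsHomLDendriform (ρ ∘ₗ T ∘ₗ (β.symm : V →ₗ[K] V))
      (-(μ ∘ₗ T ∘ₗ (β.symm : V →ₗ[K] V))) (β : V →ₗ[K] V) :=
  stmt_14_general m α β ρ μ hrep T hT
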